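/- arXiv:1205.3682 — 7 statements merged into one kernel-verified Lean document; each statement's English description precedes it below -/
import Mathlib

section
/- Let S be a ℂ-submodule of (m × n → ℂ). Suppose ρA is an extreme point of D_B(S) = {trB ρ | ρ a density matrix supported on S} (extreme points taken over ℝ, regarding complex matrices as a real vector space), and ρB is an extreme point of D_A(S) = {trA ρ | ρ a density matrix supported on S}. Then any two density matrices ρ1, ρ2 supported on S satisfying trB ρ1 = trB ρ2 = ρA and trA ρ1 = trA ρ2 = ρB are equal; moreover, if such a pre-image exists, it is a pure state, i.e., it equals the outer product |ψ⟩⟨ψ| of some unit vector ψ ∈ S. -/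
open scoped ComplexOrder

noncomputable section

/-- Partial trace over the second factor. -/
def trB {m n : Type*} [Fintype n] (ρ : Matrix (m × n) (m × n) ℂ) : Matrix m m ℂ :=
  Matrix.of fun i i' => ∑ j, ρ (i, j) (i', j)

/-- Partial trace over the first factor. -/
def trA {m n : Type*} [Fintype m] (ρ : Matrix (m × n) (m × n) ℂ) : Matrix n n ℂ :=
  Matrix.of fun j j' => ∑ i, ρ (i, j) (i, j')

/-- The outer product `|ψ⟩⟨φ|`. -/
def outer {k : Type*} (ψ φ : k → ℂ) : Matrix k k ℂ :=
  Matrix.of fun x y => ψ x * (starRingEnd ℂ) (φ y)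

/-- A density matrix: positive semidefinite with trace one. -/
def IsDensity {k : Type*} [Fintype k] (ρ : Matrix k k ℂ) : Prop :=
  ρ.PosSemidef ∧ ρ.trace = 1

/-- `P` is the matrix of the orthogonal projection onto the submodule `S`. -/
def IsOrthProjOnto {k : Type*} [Fintype k] (S : Submodule ℂ (k → ℂ)) (P : Matrix k k ℂ) : Prop :=
  P.IsHermitian ∧ P * P = P ∧ (∀ x, P.mulVec x ∈ S) ∧ ∀ y ∈ S, P.mulVec y = y

/-- `T` is supported on `S`: `P * T * P = T` for the orthogonal projection `P` onto `S`. -/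
def SupportedOn {k : Type*} [Fintype k] (S : Submodule ℂ (k → ℂ)) (T : Matrix k k ℂ) : Prop :=
  ∃ P, IsOrthProjOnto S P ∧ P * T * P = T

/-- The set of reduced density matrices on the first factor. -/
def DB {m n : Type*} [Fintype m] [Fintype n] (S : Submodule ℂ (m × n → ℂ)) :
    Set (Matrix m m ℂ) :=
  {σ | ∃ ρ, IsDensity ρ ∧ SupportedOn S ρ ∧ trB ρ = σ}

/-- The set of reduced density matrices on the second factor. -/
def DA {m n : Type*} [Fintype m] [Fintype n] (S : Submodule ℂ (m × n → ℂ)) :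
    Set (Matrix n n ℂ) :=
  {σ | ∃ ρ, IsDensity ρ ∧ SupportedOn S ρ ∧ trA ρ = σ}

/-!
Write a preimage `ρ` as `∑ i, |vᵢ⟩⟨vᵢ|` with `vᵢ ∈ S`. The preimage of an extreme point under a
linear map is a face of the convex set of states, so every `vᵢ` lies in
`K_A = {χ ∈ S | trB |χ⟩⟨χ| = ‖χ‖² ρA}`, and likewise in `K_B`. The face property also makes
`K_A` and `K_B` subspaces, and polarization upgrades the defining condition to
`trB |ψ⟩⟨φ| = ⟨φ, ψ⟩ ρA` for all `ψ, φ ∈ K_A`. Reading vectors of `ℂ^(m × n)` as `m × n`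
matrices, a unit `ψ` and a `δ ⊥ ψ` in `K_A ⊓ K_B` satisfy `Ψ Δᴴ = 0` and `Δᴴ Δ = ‖δ‖² Ψᴴ Ψ`,
so `(Δᴴ Δ)² = 0` and `δ = 0`. Hence `K_A ⊓ K_B` is at most a line, and every preimage is the
projector onto it.
-/

open Matrix

section Outer

variable {k : Type*}

lemma outer_eq_vecMulVec (ψ φ : k → ℂ) : outer ψ φ = vecMulVec ψ (star φ) := rfl

lemma outer_add_left (ψ ψ' φ : k → ℂ) : outer (ψ + ψ') φ = outer ψ φ + outer ψ' φ := by
  ext; simp [outer, add_mul]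

lemma outer_add_right (ψ φ φ' : k → ℂ) : outer ψ (φ + φ') = outer ψ φ + outer ψ φ' := by
  ext; simp [outer, mul_add]

lemma outer_sub_left (ψ ψ' φ : k → ℂ) : outer (ψ - ψ') φ = outer ψ φ - outer ψ' φ := by
  ext; simp [outer, sub_mul]

lemma outer_sub_right (ψ φ φ' : k → ℂ) : outer ψ (φ - φ') = outer ψ φ - outer ψ φ' := by
  ext; simp [outer, mul_sub]

lemma outer_smul_left (c : ℂ) (ψ φ : k → ℂ) : outer (c • ψ) φ = c • outer ψ φ := by
  ext; simp [outer, mul_assoc]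

lemma outer_smul_right (c : ℂ) (ψ φ : k → ℂ) : outer ψ (c • φ) = star c • outer ψ φ := by
  ext; simp [outer]; ring

lemma conjTranspose_outer (ψ φ : k → ℂ) : (outer ψ φ)ᴴ = outer φ ψ := by
  ext; simp [outer, mul_comm]

variable [Fintype k]

lemma posSemidef_outer_self (ψ : k → ℂ) : (outer ψ ψ).PosSemidef :=
  posSemidef_vecMulVec_self_star ψ

lemma trace_outer_comm (ψ φ : k → ℂ) : (outer ψ φ).trace = star (outer φ ψ).trace := by
  rw [← trace_conjTranspose, conjTranspose_outer]

lemma trace_outer_self (ψ : k → ℂ) : (outer ψ ψ).trace = ((∑ x, ‖ψ x‖ ^ 2 : ℝ) : ℂ) := by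
  simp [trace, outer, Complex.mul_conj']

lemma mul_outer_mul_conjTranspose (P : Matrix k k ℂ) (ψ φ : k → ℂ) :
    P * outer ψ φ * Pᴴ = outer (P *ᵥ ψ) (P *ᵥ φ) := by
  rw [outer_eq_vecMulVec, mul_vecMulVec, vecMulVec_mul, outer_eq_vecMulVec, star_mulVec]

lemma exists_unit_mem_of_ne_zero {K : Submodule ℂ (k → ℂ)} {v : k → ℂ} (hv : v ∈ K) (hv0 : v ≠ 0) :
    ∃ ψ ∈ K, ∑ x, ‖ψ x‖ ^ 2 = 1 := by
  have ht : 0 < ∑ x, ‖v x‖ ^ 2 := by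
    obtain ⟨x, hx⟩ := Function.ne_iff.mp hv0
    exact Finset.sum_pos' (fun x _ => by positivity)
      ⟨x, Finset.mem_univ x, pow_pos (norm_pos_iff.mpr hx) 2⟩
  refine ⟨((√(∑ x, ‖v x‖ ^ 2))⁻¹ : ℝ) • v, K.smul_of_tower_mem _ hv, ?_⟩
  simp only [Pi.smul_apply, norm_smul, mul_pow, ← Finset.mul_sum, Real.norm_eq_abs, sq_abs,
    inv_pow, Real.sq_sqrt ht.le, inv_mul_cancel₀ ht.ne']

end Outer

section Support

variable {k : Type*} [Fintype k] {S : Submodule ℂ (k → ℂ)} {P : Matrix k k ℂ}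

lemma IsOrthProjOnto.eq {Q : Matrix k k ℂ} (hP : IsOrthProjOnto S P) (hQ : IsOrthProjOnto S Q) :
    P = Q := by
  classical
  have hQP : Q * P = P := ext_of_mulVec_single fun j => by
    rw [← mulVec_mulVec, hQ.2.2.2 _ (hP.2.2.1 _)]
  have hPQ : P * Q = Q := ext_of_mulVec_single fun j => by
    rw [← mulVec_mulVec, hP.2.2.2 _ (hQ.2.2.1 _)]
  calc P = (Q * P)ᴴ := by rw [hQP, hP.1.eq]
    _ = P * Q := by rw [conjTranspose_mul, hP.1.eq, hQ.1.eq]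
    _ = Q := hPQ

lemma IsOrthProjOnto.mul_mul_eq (hP : IsOrthProjOnto S P) {X : Matrix k k ℂ}
    (hX : SupportedOn S X) : P * X * P = X := by
  obtain ⟨Q, hQ, hQX⟩ := hX
  rwa [hP.eq hQ]

lemma IsOrthProjOnto.mul_outer_mul (hP : IsOrthProjOnto S P) {ψ φ : k → ℂ} (hψ : ψ ∈ S)
    (hφ : φ ∈ S) : P * outer ψ φ * P = outer ψ φ := by
  simpa only [hP.1.eq, hP.2.2.2 ψ hψ, hP.2.2.2 φ hφ] using mul_outer_mul_conjTranspose P ψ φ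

def supportedStates (S : Submodule ℂ (k → ℂ)) : Set (Matrix k k ℂ) :=
  {ρ | IsDensity ρ ∧ SupportedOn S ρ}

lemma IsOrthProjOnto.smul_mem_supportedStates (hP : IsOrthProjOnto S P) {X : Matrix k k ℂ}
    (hX : X.PosSemidef) (hXP : P * X * P = X) {a : ℝ} (ha : X.trace = a) (ha0 : 0 < a) :
    a⁻¹ • X ∈ supportedStates S := by
  refine ⟨⟨hX.smul (inv_nonneg.mpr ha0.le), ?_⟩, P, hP,
    by rw [mul_smul_comm, smul_mul_assoc, hXP]⟩
  rw [trace_smul, ha, Complex.real_smul, Complex.ofReal_inv,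
    inv_mul_cancel₀ (by exact_mod_cast ha0.ne')]

lemma IsOrthProjOnto.exists_eq_sum_outer (hP : IsOrthProjOnto S P) {ρ : Matrix k k ℂ}
    (hρ : ρ.PosSemidef) (hρP : P * ρ * P = ρ) :
    ∃ v : k → k → ℂ, (∀ i, v i ∈ S) ∧ ρ = ∑ i, outer (v i) (v i) := by
  classical
  obtain ⟨B, rfl⟩ : ∃ B : Matrix k k ℂ, ρ = Bᴴ * B := by
    open scoped MatrixOrder Matrix.Norms.L2Operator in
    exact CStarAlgebra.nonneg_iff_eq_star_mul_self.mp hρ.nonneg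
  set w : k → k → ℂ := fun i x => star (B i x)
  have hB : Bᴴ * B = ∑ i, outer (w i) (w i) := by
    ext x y; simp [w, outer, mul_apply, Matrix.sum_apply]
  refine ⟨fun i => P *ᵥ w i, fun i => hP.2.2.1 _, ?_⟩
  conv_lhs => rw [← hρP, hB, Finset.mul_sum, Finset.sum_mul]
  refine Finset.sum_congr rfl fun i _ => ?_
  simpa only [hP.1.eq] using mul_outer_mul_conjTranspose P (w i) (w i)

end Support

lemma eq_of_smul_add_smul_eq_of_mem_extremePoints {E : Type*} [AddCommGroup E] [Module ℝ E]
    {A : Set E} {x y z : E} (hx : x ∈ Set.extremePoints ℝ A) (hy : y ∈ A) (hz : z ∈ A)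
    {a b : ℝ} (ha : 0 < a) (hb : 0 < b) (h : a • y + b • z = (a + b) • x) : y = x := by
  have hab : 0 < a + b := add_pos ha hb
  refine ((mem_extremePoints.1 hx).2 y hy z hz ⟨a / (a + b), b / (a + b), by positivity,
    by positivity, by field_simp, ?_⟩).1
  rw [div_eq_inv_mul, div_eq_inv_mul, mul_smul, mul_smul, ← smul_add, h, smul_smul,
    inv_mul_cancel₀ hab.ne', one_smul]

lemma map_outer_eq_zero_of_map_outer_self_eq_zero {k M : Type*} [AddCommGroup M] [Module ℂ M]
    (L : Matrix k k ℂ →ₗ[ℂ] M) {K : Submodule ℂ (k → ℂ)}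
    (hK : ∀ χ ∈ K, L (outer χ χ) = 0) {ψ φ : k → ℂ} (hψ : ψ ∈ K) (hφ : φ ∈ K) :
    L (outer ψ φ) = 0 := by
  have h1 := hK _ (K.add_mem hψ hφ)
  have hI := hK _ (K.add_mem hψ (K.smul_mem Complex.I hφ))
  simp only [outer_add_left, outer_add_right, outer_smul_left, outer_smul_right, map_add,
    map_smul, hK ψ hψ, hK φ hφ, Complex.star_def, Complex.conj_I] at h1 hI
  linear_combination (norm := match_scalars) (2⁻¹ : ℂ) • h1 + ((2 : ℂ)⁻¹ * Complex.I) • hI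
  all_goals ring_nf; simp [Complex.I_sq]

section Face

variable {k M : Type*} [Fintype k] [AddCommGroup M] [Module ℂ M]

def defect (T : Matrix k k ℂ →ₗ[ℂ] M) (ρ₀ : M) : Matrix k k ℂ →ₗ[ℂ] M :=
  T - (traceLinearMap k ℂ ℂ).smulRight ρ₀

lemma defect_apply (T : Matrix k k ℂ →ₗ[ℂ] M) (ρ₀ : M) (X : Matrix k k ℂ) :
    defect T ρ₀ X = T X - X.trace • ρ₀ := rfl

variable [Module ℝ M] [IsScalarTower ℝ ℂ M] {S : Submodule ℂ (k → ℂ)} {P : Matrix k k ℂ}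
  {T : Matrix k k ℂ →ₗ[ℂ] M} {ρ₀ : M}

/-- The preimage of an extreme point is a face. -/
lemma defect_eq_zero_of_add (hP : IsOrthProjOnto S P)
    (hext : ρ₀ ∈ Set.extremePoints ℝ (T '' supportedStates S)) {X Y : Matrix k k ℂ}
    (hX : X.PosSemidef) (hY : Y.PosSemidef) (hXP : P * X * P = X) (hYP : P * Y * P = Y)
    (h : defect T ρ₀ (X + Y) = 0) : defect T ρ₀ X = 0 := by
  obtain ⟨a, ha0, ha⟩ : ∃ a : ℝ, 0 ≤ a ∧ (a : ℂ) = X.trace :=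
    RCLike.nonneg_iff_exists_ofReal.mp hX.trace_nonneg
  obtain ⟨b, hb0, hb⟩ : ∃ b : ℝ, 0 ≤ b ∧ (b : ℂ) = Y.trace :=
    RCLike.nonneg_iff_exists_ofReal.mp hY.trace_nonneg
  rcases ha0.eq_or_lt with rfl | ha0
  · rw [(hX.trace_eq_zero_iff).mp (by simpa using ha.symm), map_zero]
  rcases hb0.eq_or_lt with rfl | hb0
  · rwa [(hY.trace_eq_zero_iff).mp (by simpa using hb.symm), add_zero] at h
  have hcoe (r : ℝ) (x : M) : (r : ℂ) • x = r • x :=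
    (RCLike.real_smul_eq_coe_smul (K := ℂ) r x).symm
  have hTX : a • T (a⁻¹ • X) = T X := by
    rw [LinearMap.map_smul_of_tower, smul_smul, mul_inv_cancel₀ ha0.ne', one_smul]
  have hTY : b • T (b⁻¹ • Y) = T Y := by
    rw [LinearMap.map_smul_of_tower, smul_smul, mul_inv_cancel₀ hb0.ne', one_smul]
  rw [defect_apply, sub_eq_zero, trace_add, ← ha, ← hb, map_add, ← Complex.ofReal_add, hcoe,
    ← hTX, ← hTY] at h
  have key := eq_of_smul_add_smul_eq_of_mem_extremePoints hext
    ⟨_, hP.smul_mem_supportedStates hX hXP ha.symm ha0, rfl⟩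
    ⟨_, hP.smul_mem_supportedStates hY hYP hb.symm hb0, rfl⟩ ha0 hb0 h
  rw [defect_apply, ← ha, hcoe, ← hTX, key, sub_self]

def faceSubmodule (hP : IsOrthProjOnto S P)
    (hext : ρ₀ ∈ Set.extremePoints ℝ (T '' supportedStates S)) : Submodule ℂ (k → ℂ) where
  carrier := {χ | χ ∈ S ∧ defect T ρ₀ (outer χ χ) = 0}
  zero_mem' := ⟨S.zero_mem, by simp [outer_eq_vecMulVec]⟩
  add_mem' := by
    rintro ψ φ ⟨hψ, hψ0⟩ ⟨hφ, hφ0⟩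
    refine ⟨S.add_mem hψ hφ, defect_eq_zero_of_add hP hext (posSemidef_outer_self _)
      (posSemidef_outer_self (ψ - φ)) (hP.mul_outer_mul (S.add_mem hψ hφ) (S.add_mem hψ hφ))
      (hP.mul_outer_mul (S.sub_mem hψ hφ) (S.sub_mem hψ hφ)) ?_⟩
    have hpar : outer (ψ + φ) (ψ + φ) + outer (ψ - φ) (ψ - φ)
        = (2 : ℂ) • (outer ψ ψ + outer φ φ) := by
      simp only [outer_add_left, outer_add_right, outer_sub_left, outer_sub_right]
      module
    rw [hpar, map_smul, map_add, hψ0, hφ0, add_zero, smul_zero]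
  smul_mem' c χ := by
    rintro ⟨hχ, hχ0⟩
    refine ⟨S.smul_mem c hχ, ?_⟩
    simp only [outer_smul_left, outer_smul_right, map_smul, hχ0, smul_zero]

lemma faceSubmodule_le (hP : IsOrthProjOnto S P)
    (hext : ρ₀ ∈ Set.extremePoints ℝ (T '' supportedStates S)) : faceSubmodule hP hext ≤ S :=
  fun _ hχ => hχ.1

lemma mem_faceSubmodule_of_defect_sum_eq_zero (hP : IsOrthProjOnto S P)
    (hext : ρ₀ ∈ Set.extremePoints ℝ (T '' supportedStates S)) {ι : Type*} [Fintype ι]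
    {v : ι → k → ℂ} (hv : ∀ i, v i ∈ S) (h : defect T ρ₀ (∑ i, outer (v i) (v i)) = 0) (i : ι) :
    v i ∈ faceSubmodule hP hext := by
  classical
  refine ⟨hv i, defect_eq_zero_of_add hP hext (posSemidef_outer_self _)
    (posSemidef_sum (Finset.univ.erase i) fun j _ => posSemidef_outer_self (v j))
    (hP.mul_outer_mul (hv i) (hv i)) ?_ ?_⟩
  · simp only [Finset.mul_sum, Finset.sum_mul, hP.mul_outer_mul (hv _) (hv _)]
  · rwa [Finset.add_sum_erase _ (fun j => outer (v j) (v j)) (Finset.mem_univ i)]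

end Face

lemma Matrix.eq_zero_of_mul_conjTranspose_eq_zero {m n 𝕜 : Type*} [Fintype m] [Fintype n]
    [RCLike 𝕜] {Ψ Δ : Matrix m n 𝕜} {r : 𝕜} (h : Ψ * Δᴴ = 0) (h' : Δᴴ * Δ = r • (Ψᴴ * Ψ)) :
    Δ = 0 := by
  have hΔΨ : Δ * Ψᴴ = 0 := by simpa using congrArg conjTranspose h
  have hsq : (Δᴴ * Δ)ᴴ * (Δᴴ * Δ) = 0 :=
    calc (Δᴴ * Δ)ᴴ * (Δᴴ * Δ) = Δᴴ * Δ * (r • (Ψᴴ * Ψ)) := by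
          rw [(isHermitian_conjTranspose_mul_self Δ).eq, ← h']
      _ = r • (Δᴴ * (Δ * Ψᴴ) * Ψ) := by simp only [Matrix.mul_smul, Matrix.mul_assoc]
      _ = 0 := by rw [hΔΨ, Matrix.mul_zero, Matrix.zero_mul, smul_zero]
  exact conjTranspose_mul_self_eq_zero.mp (conjTranspose_mul_self_eq_zero.mp hsq)

section Bipartite

variable {m n : Type*}

def trBLinearMap [Fintype n] : Matrix (m × n) (m × n) ℂ →ₗ[ℂ] Matrix m m ℂ where
  toFun := trB
  map_add' _ _ := by ext; simp [trB, Finset.sum_add_distrib]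
  map_smul' _ _ := by ext; simp [trB, Finset.mul_sum]

def trALinearMap [Fintype m] : Matrix (m × n) (m × n) ℂ →ₗ[ℂ] Matrix n n ℂ where
  toFun := trA
  map_add' _ _ := by ext; simp [trA, Finset.sum_add_distrib]
  map_smul' _ _ := by ext; simp [trA, Finset.mul_sum]

lemma DB_eq_image [Fintype m] [Fintype n] (S : Submodule ℂ (m × n → ℂ)) :
    DB S = trBLinearMap '' supportedStates S := by
  ext; simp [DB, supportedStates, trBLinearMap, and_assoc]

lemma DA_eq_image [Fintype m] [Fintype n] (S : Submodule ℂ (m × n → ℂ)) :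
    DA S = trALinearMap '' supportedStates S := by
  ext; simp [DA, supportedStates, trALinearMap, and_assoc]

lemma trB_outer [Fintype n] (ψ φ : m × n → ℂ) :
    trB (outer ψ φ) = of (Function.curry ψ) * (of (Function.curry φ))ᴴ := by
  ext; simp [trB, outer, mul_apply]

lemma trA_outer [Fintype m] (ψ φ : m × n → ℂ) :
    trA (outer ψ φ) = ((of (Function.curry φ))ᴴ * of (Function.curry ψ))ᵀ := by
  ext; simp [trA, outer, mul_apply, mul_comm]

lemma eq_zero_of_trB_outer_eq_zero [Fintype m] [Fintype n] {ψ δ : m × n → ℂ} {r : ℂ}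
    (hB : trB (outer ψ δ) = 0) (hA : trA (outer δ δ) = r • trA (outer ψ ψ)) : δ = 0 := by
  rw [trB_outer] at hB
  rw [trA_outer, trA_outer, ← transpose_smul, transpose_inj] at hA
  have h := eq_zero_of_mul_conjTranspose_eq_zero hB hA
  funext x
  exact congrFun₂ h x.1 x.2

section JointFace

variable [Fintype m] [Fintype n] {S : Submodule ℂ (m × n → ℂ)} {P : Matrix (m × n) (m × n) ℂ}
  (hP : IsOrthProjOnto S P) {ρA : Matrix m m ℂ} {ρB : Matrix n n ℂ}
  (hA : ρA ∈ Set.extremePoints ℝ (trBLinearMap '' supportedStates S))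
  (hB : ρB ∈ Set.extremePoints ℝ (trALinearMap '' supportedStates S))

def jointFace : Submodule ℂ (m × n → ℂ) := faceSubmodule hP hA ⊓ faceSubmodule hP hB

include hP hA hB in
lemma outer_eq_trace_smul_of_mem_jointFace {ψ v : m × n → ℂ} (hψ : ψ ∈ jointFace hP hA hB)
    (hψ1 : ∑ x, ‖ψ x‖ ^ 2 = 1) (hv : v ∈ jointFace hP hA hB) :
    outer v v = (outer v v).trace • outer ψ ψ := by
  set K := jointFace hP hA hB
  have hψψ : (outer ψ ψ).trace = 1 := by rw [trace_outer_self, hψ1, Complex.ofReal_one]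
  have hcross {a b : m × n → ℂ} (ha : a ∈ K) (hb : b ∈ K) :
      trB (outer a b) = (outer a b).trace • ρA ∧ trA (outer a b) = (outer a b).trace • ρB :=
    ⟨sub_eq_zero.mp <|
      map_outer_eq_zero_of_map_outer_self_eq_zero (K := K) _ (fun _ hχ => hχ.1.2) ha hb,
    sub_eq_zero.mp <|
      map_outer_eq_zero_of_map_outer_self_eq_zero (K := K) _ (fun _ hχ => hχ.2.2) ha hb⟩
  set c := (outer v ψ).trace
  set δ := v - c • ψ
  have hδ : δ ∈ K := K.sub_mem hv (K.smul_mem c hψ)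
  have hψδ : (outer ψ δ).trace = 0 := by
    rw [outer_sub_right, outer_smul_right, trace_sub, trace_smul, hψψ, trace_outer_comm ψ v,
      smul_eq_mul, mul_one, sub_self]
  have hδB : trB (outer ψ δ) = 0 := by rw [(hcross hψ hδ).1, hψδ, zero_smul]
  have hδA : trA (outer δ δ) = (outer δ δ).trace • trA (outer ψ ψ) := by
    rw [(hcross hδ hδ).2, (hcross hψ hψ).2, hψψ, one_smul]
  have hvψ : v = c • ψ := sub_eq_zero.mp (eq_zero_of_trB_outer_eq_zero hδB hδA)
  rw [hvψ, outer_smul_left, outer_smul_right, trace_smul, trace_smul, hψψ, smul_smul,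
    smul_eq_mul, smul_eq_mul, mul_one]

variable {ρ : Matrix (m × n) (m × n) ℂ} (hρ : IsDensity ρ) (hρS : SupportedOn S ρ)
  (hρB : trB ρ = ρA) (hρA : trA ρ = ρB)

include hρ hρS hρB hρA in
lemma exists_eq_sum_outer_mem_jointFace :
    ∃ v : m × n → m × n → ℂ, (∀ i, v i ∈ jointFace hP hA hB) ∧ ρ = ∑ i, outer (v i) (v i) := by
  obtain ⟨v, hvS, rfl⟩ := hP.exists_eq_sum_outer hρ.1 (hP.mul_mul_eq hρS)
  refine ⟨v, fun i => ⟨mem_faceSubmodule_of_defect_sum_eq_zero hP hA hvS ?_ i,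
    mem_faceSubmodule_of_defect_sum_eq_zero hP hB hvS ?_ i⟩, rfl⟩
  · rw [defect_apply, hρ.2, one_smul]
    exact sub_eq_zero.mpr hρB
  · rw [defect_apply, hρ.2, one_smul]
    exact sub_eq_zero.mpr hρA

include hρ hρS hρB hρA in
lemma eq_outer_of_mem_jointFace {ψ : m × n → ℂ} (hψ : ψ ∈ jointFace hP hA hB)
    (hψ1 : ∑ x, ‖ψ x‖ ^ 2 = 1) : ρ = outer ψ ψ := by
  obtain ⟨v, hv, hρv⟩ := exists_eq_sum_outer_mem_jointFace hP hA hB hρ hρS hρB hρA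
  calc ρ = ∑ i, (outer (v i) (v i)).trace • outer ψ ψ := by
        rw [hρv]
        exact Finset.sum_congr rfl fun i _ =>
          outer_eq_trace_smul_of_mem_jointFace hP hA hB hψ hψ1 (hv i)
    _ = ρ.trace • outer ψ ψ := by rw [← Finset.sum_smul, hρv, trace_sum]
    _ = outer ψ ψ := by rw [hρ.2, one_smul]

include hρ hρS hρB hρA in
lemma exists_unit_mem_jointFace : ∃ ψ ∈ jointFace hP hA hB, ∑ x, ‖ψ x‖ ^ 2 = 1 := by
  obtain ⟨v, hv, hρv⟩ := exists_eq_sum_outer_mem_jointFace hP hA hB hρ hρS hρB hρA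
  obtain ⟨i, hi⟩ : ∃ i, v i ≠ 0 := by
    by_contra! h
    simpa [hρv, h, outer_eq_vecMulVec] using hρ.2
  exact exists_unit_mem_of_ne_zero (hv i) hi

end JointFace

end Bipartite

theorem extreme_pair_unique_pure_preimage_general
    {m n : Type*} [Fintype m] [Fintype n]
    (S : Submodule ℂ (m × n → ℂ)) (ρA : Matrix m m ℂ) (ρB : Matrix n n ℂ)
    (hA : ρA ∈ Set.extremePoints ℝ (DB S))
    (hB : ρB ∈ Set.extremePoints ℝ (DA S)) :
    (∀ ρ1 ρ2 : Matrix (m × n) (m × n) ℂ,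
        IsDensity ρ1 → SupportedOn S ρ1 → trB ρ1 = ρA → trA ρ1 = ρB →
        IsDensity ρ2 → SupportedOn S ρ2 → trB ρ2 = ρA → trA ρ2 = ρB → ρ1 = ρ2) ∧
    (∀ ρ : Matrix (m × n) (m × n) ℂ,
        IsDensity ρ → SupportedOn S ρ → trB ρ = ρA → trA ρ = ρB →
        ∃ ψ : m × n → ℂ, ψ ∈ S ∧ (∑ x, ‖ψ x‖ ^ 2) = 1 ∧ ρ = outer ψ ψ) := by
  obtain ⟨-, -, ⟨P, hP, -⟩, -⟩ := hA.1
  rw [DB_eq_image] at hA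
  rw [DA_eq_image] at hB
  refine ⟨fun ρ₁ ρ₂ h₁ s₁ b₁ a₁ h₂ s₂ b₂ a₂ => ?_, fun ρ h s b a => ?_⟩
  · obtain ⟨ψ, hψ, hψ1⟩ := exists_unit_mem_jointFace hP hA hB h₁ s₁ b₁ a₁
    rw [eq_outer_of_mem_jointFace hP hA hB h₁ s₁ b₁ a₁ hψ hψ1,
      eq_outer_of_mem_jointFace hP hA hB h₂ s₂ b₂ a₂ hψ hψ1]
  · obtain ⟨ψ, hψ, hψ1⟩ := exists_unit_mem_jointFace hP hA hB h s b a
    exact ⟨ψ, faceSubmodule_le hP hA hψ.1, hψ1, eq_outer_of_mem_jointFace hP hA hB h s b a hψ hψ1⟩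

theorem extreme_pair_unique_pure_preimage
    {m n : Type*} [Fintype m] [Fintype n] [DecidableEq m] [DecidableEq n]
    (S : Submodule ℂ (m × n → ℂ)) (ρA : Matrix m m ℂ) (ρB : Matrix n n ℂ)
    (hA : ρA ∈ Set.extremePoints ℝ (DB S))
    (hB : ρB ∈ Set.extremePoints ℝ (DA S)) :
    (∀ ρ1 ρ2 : Matrix (m × n) (m × n) ℂ,
        IsDensity ρ1 → SupportedOn S ρ1 → trB ρ1 = ρA → trA ρ1 = ρB →
        IsDensity ρ2 → SupportedOn S ρ2 → trB ρ2 = ρA → trA ρ2 = ρB → ρ1 = ρ2) ∧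
    (∀ ρ : Matrix (m × n) (m × n) ℂ,
        IsDensity ρ → SupportedOn S ρ → trB ρ = ρA → trA ρ = ρB →
        ∃ ψ : m × n → ℂ, ψ ∈ S ∧ (∑ x, ‖ψ x‖ ^ 2) = 1 ∧ ρ = outer ψ ψ) :=
  extreme_pair_unique_pure_preimage_general S ρA ρB hA hB

end
end

section
/- Let G be a ℂ-submodule of (m × n → ℂ) and ρA a fixed matrix such that trB |ψ⟩⟨ψ| = ρA for every unit vector ψ ∈ G. Then for any two vectors ψ1, ψ2 ∈ G that are orthogonal (∑ x, conj (ψ1 x) * ψ2 x = 0), the transition reduced matrix vanishes: trB |ψ1⟩⟨ψ2| = 0. -/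
/-! Rescaling a nonzero `ψ ∈ G` to a unit vector gives `trB |ψ⟩⟨ψ| = ⟨ψ, ψ⟩ ρA` on all of `G`.
Both sides are sesquilinear in `(ψ, φ) ↦ trB |ψ⟩⟨φ|` resp. `⟨φ, ψ⟩ ρA`, so by complex
polarization they agree on `G × G`, and the right-hand side vanishes for orthogonal vectors. -/

open scoped ComplexOrder

noncomputable section

open Matrix

theorem LinearMap.sesq_eq_of_diag_eq {V M : Type*} [AddCommGroup V] [Module ℂ V]
    [AddCommGroup M] [Module ℂ M] (B B' : V →ₗ[ℂ] V →ₗ⋆[ℂ] M) {S : Submodule ℂ V}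
    (h : ∀ x ∈ S, B x x = B' x x) {x y : V} (hx : x ∈ S) (hy : y ∈ S) : B x y = B' x y := by
  have hsum := h (x + y) (S.add_mem hx hy)
  have hrot := h (x + Complex.I • y) (S.add_mem hx (S.smul_mem _ hy))
  simp only [map_add, map_smul, map_smulₛₗ, LinearMap.add_apply, LinearMap.smul_apply,
    Complex.conj_I, h x hx, h y hy] at hsum hrot
  -- with `D := B - B'`: `hsum` is `D x y + D y x = 0` and `hrot` is `i (D y x - D x y) = 0`
  linear_combination (norm := module)
    (2⁻¹ : ℂ) • (hsum + Complex.I • hrot - Complex.I_sq • (B y x - B' y x - (B x y - B' x y)))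

def outerₛₗ (k : Type*) : (k → ℂ) →ₗ[ℂ] (k → ℂ) →ₗ⋆[ℂ] Matrix k k ℂ :=
  LinearMap.mk₂'ₛₗ (RingHom.id ℂ) (starRingEnd ℂ) outer
    (fun _ _ _ => by ext; simp [outer, add_mul]) (fun _ _ _ => by ext; simp [outer, mul_assoc])
    (fun _ _ _ => by ext; simp [outer, mul_add]) (fun _ _ _ => by ext; simp [outer]; ring)

def trBₗ (m n : Type*) [Fintype n] : Matrix (m × n) (m × n) ℂ →ₗ[ℂ] Matrix m m ℂ where
  toFun := trB
  map_add' _ _ := by ext; simp [trB, Finset.sum_add_distrib]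
  map_smul' _ _ := by ext; simp [trB, Finset.mul_sum]

def dotProductₛₗ (k : Type*) [Fintype k] : (k → ℂ) →ₗ[ℂ] (k → ℂ) →ₗ⋆[ℂ] ℂ :=
  LinearMap.mk₂'ₛₗ (RingHom.id ℂ) (starRingEnd ℂ) (fun ψ φ => star φ ⬝ᵥ ψ)
    (fun _ _ _ => dotProduct_add _ _ _) (fun _ _ _ => dotProduct_smul _ _ _)
    (fun _ _ _ => by simp [add_dotProduct]) (fun _ _ _ => by simp [smul_dotProduct])

theorem star_dotProduct_self_eq_sum_norm_sq {k : Type*} [Fintype k] (ψ : k → ℂ) :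
    star ψ ⬝ᵥ ψ = ((∑ x, ‖ψ x‖ ^ 2 : ℝ) : ℂ) := by
  simp [dotProduct, Complex.conj_mul']

theorem sum_norm_sq_smul {k : Type*} [Fintype k] (c : ℂ) (ψ : k → ℂ) :
    ∑ x, ‖(c • ψ) x‖ ^ 2 = ‖c‖ ^ 2 * ∑ x, ‖ψ x‖ ^ 2 := by
  simp [mul_pow, Finset.mul_sum]

theorem trB_outer_smul_self {m n : Type*} [Fintype n] (c : ℂ) (ψ : m × n → ℂ) :
    trB (outer (c • ψ) (c • ψ)) = (‖c‖ ^ 2 : ℂ) • trB (outer ψ ψ) := by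
  change (outerₛₗ _).compr₂ₛₗ (trBₗ m n) (c • ψ) (c • ψ) = _
  simp only [map_smul, map_smulₛₗ, LinearMap.smul_apply, smul_smul, Complex.conj_mul']
  rfl

theorem trB_outer_self_eq_smul {m n : Type*} [Fintype m] [Fintype n]
    {G : Submodule ℂ (m × n → ℂ)} {ρA : Matrix m m ℂ}
    (hG : ∀ ψ : m × n → ℂ, ψ ∈ G → (∑ x, ‖ψ x‖ ^ 2) = 1 → trB (outer ψ ψ) = ρA)
    {ψ : m × n → ℂ} (hψ : ψ ∈ G) : trB (outer ψ ψ) = (star ψ ⬝ᵥ ψ) • ρA := by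
  rcases eq_or_ne ψ 0 with rfl | hψ0
  · ext; simp [trB, outer]
  set s := ∑ x, ‖ψ x‖ ^ 2
  have hs : 0 < s := by
    have := dotProduct_star_self_pos_iff.mpr hψ0
    rwa [star_dotProduct_self_eq_sum_norm_sq, Complex.zero_lt_real] at this
  set c : ℂ := (((√s)⁻¹ : ℝ) : ℂ)
  have hc : ‖c‖ ^ 2 = s⁻¹ := by
    rw [Complex.norm_real, Real.norm_eq_abs, sq_abs, inv_pow, Real.sq_sqrt hs.le]
  have hunit := hG (c • ψ) (G.smul_mem c hψ) <| by
    rw [sum_norm_sq_smul, hc, inv_mul_cancel₀ hs.ne']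
  rw [trB_outer_smul_self, ← Complex.ofReal_pow, hc] at hunit
  rw [star_dotProduct_self_eq_sum_norm_sq, ← hunit, smul_smul, Complex.ofReal_inv,
    mul_inv_cancel₀ (Complex.ofReal_ne_zero.mpr hs.ne'), one_smul]

theorem transition_rdm_vanishes_general
    {m n : Type*} [Fintype m] [Fintype n]
    (G : Submodule ℂ (m × n → ℂ)) (ρA : Matrix m m ℂ)
    (hG : ∀ ψ : m × n → ℂ, ψ ∈ G → (∑ x, ‖ψ x‖ ^ 2) = 1 → trB (outer ψ ψ) = ρA)
    (ψ1 ψ2 : m × n → ℂ) (h1 : ψ1 ∈ G) (h2 : ψ2 ∈ G)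
    (horth : ∑ x, (starRingEnd ℂ) (ψ1 x) * ψ2 x = 0) :
    trB (outer ψ1 ψ2) = 0 := by
  have hpolar := LinearMap.sesq_eq_of_diag_eq ((outerₛₗ _).compr₂ₛₗ (trBₗ m n))
    ((dotProductₛₗ _).compr₂ₛₗ (LinearMap.toSpanSingleton ℂ _ ρA))
    (fun ψ hψ => trB_outer_self_eq_smul hG hψ) h1 h2
  have horth' : star ψ2 ⬝ᵥ ψ1 = 0 := by
    rw [star_dotProduct]
    exact congrArg star horth |>.trans (star_zero ℂ)
  calc trB (outer ψ1 ψ2) = (star ψ2 ⬝ᵥ ψ1) • ρA := hpolar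
    _ = 0 := by rw [horth', zero_smul]

theorem transition_rdm_vanishes
    {m n : Type*} [Fintype m] [Fintype n] [DecidableEq m] [DecidableEq n]
    (G : Submodule ℂ (m × n → ℂ)) (ρA : Matrix m m ℂ)
    (hG : ∀ ψ : m × n → ℂ, ψ ∈ G → (∑ x, ‖ψ x‖ ^ 2) = 1 → trB (outer ψ ψ) = ρA)
    (ψ1 ψ2 : m × n → ℂ) (h1 : ψ1 ∈ G) (h2 : ψ2 ∈ G)
    (horth : ∑ x, (starRingEnd ℂ) (ψ1 x) * ψ2 x = 0) :
    trB (outer ψ1 ψ2) = 0 :=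
  transition_rdm_vanishes_general G ρA hG ψ1 ψ2 h1 h2 horth

end
end

section
/- Let S be a ℂ-submodule of (m × n → ℂ). If Q lies in the intrinsic interior (intrinsicInterior over ℝ) of the convex set D_B(S) = {trB ρ | ρ a density matrix supported on S}, then there exists a density matrix ρ supported on S with trB ρ = Q whose rank equals dim S (i.e., ρ has full rank on S). -/
open scoped ComplexOrder

noncomputable section

/-!
The maximally mixed state `ρ₀ = P / dim S` on `S` has full rank on `S`. As `Q` lies in the
relative interior of `DB S`, it is a proper convex combination `a • trB ρ₀ + b • trB ρ₁` of
`trB ρ₀` and another point `trB ρ₁` of `DB S`. Then `a • ρ₀ + b • ρ₁` is a density matrix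
supported on `S` with partial trace `Q`, and since both summands are positive semidefinite its
kernel lies in that of `ρ₀`, so its rank is `dim S`.
-/

open scoped Matrix

theorem exists_mem_openSegment_of_mem_intrinsicInterior {V : Type*} [AddCommGroup V] [Module ℝ V]
    [TopologicalSpace V] [IsTopologicalAddGroup V] [ContinuousSMul ℝ V] {s : Set V} {x y : V}
    (hx : x ∈ intrinsicInterior ℝ s) (hy : y ∈ s) : ∃ z ∈ s, x ∈ openSegment ℝ y z := by
  obtain ⟨x', hx', rfl⟩ := hx
  have hmem (ε : ℝ) : (x' : V) + ε • ((x' : V) - y) ∈ affineSpan ℝ s := by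
    convert AffineMap.lineMap_mem (-ε) x'.2 (subset_affineSpan ℝ s hy) using 1
    rw [AffineMap.lineMap_apply, vsub_eq_sub, vadd_eq_add]
    module
  let f : ℝ → affineSpan ℝ s := fun ε => ⟨x' + ε • (x' - y), hmem ε⟩
  have hf0 : f 0 = x' := by simp [f]
  have hev : ∀ᶠ ε in nhdsWithin (0 : ℝ) (Set.Ioi 0),
      0 < ε ∧ f ε ∈ interior ((↑) ⁻¹' s : Set (affineSpan ℝ s)) :=
    eventually_mem_nhdsWithin.and <| nhdsWithin_le_nhds <|
      (by fun_prop : Continuous f).continuousAt.preimage_mem_nhds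
        (hf0 ▸ isOpen_interior.mem_nhds hx')
  obtain ⟨ε, hε, hfε⟩ := hev.exists
  refine ⟨f ε, (interior_subset hfε : f ε ∈ (↑) ⁻¹' s), ε / (1 + ε), 1 / (1 + ε),
    by positivity, by positivity, by field_simp; ring, ?_⟩
  simp only [f]
  match_scalars <;> grind

theorem LinearMap.finrank_range_le_of_ker_le {K V W₁ W₂ : Type*} [DivisionRing K]
    [AddCommGroup V] [Module K V] [FiniteDimensional K V] [AddCommGroup W₁] [Module K W₁]
    [AddCommGroup W₂] [Module K W₂] {f : V →ₗ[K] W₁} {g : V →ₗ[K] W₂}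
    (h : LinearMap.ker f ≤ LinearMap.ker g) :
    Module.finrank K (LinearMap.range g) ≤ Module.finrank K (LinearMap.range f) := by
  have := Submodule.finrank_mono h
  have := f.finrank_range_add_finrank_ker
  have := g.finrank_range_add_finrank_ker
  omega

theorem Matrix.PosSemidef.rank_le_rank_add {𝕜 k : Type*} [RCLike 𝕜] [Fintype k]
    {A B : Matrix k k 𝕜} (hA : A.PosSemidef) (hB : B.PosSemidef) : A.rank ≤ (A + B).rank := by
  refine LinearMap.finrank_range_le_of_ker_le fun x hx => ?_
  rw [LinearMap.mem_ker, Matrix.mulVecLin_apply] at hx ⊢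
  have hsum : star x ⬝ᵥ A *ᵥ x + star x ⬝ᵥ B *ᵥ x = 0 := by
    rw [← dotProduct_add, ← Matrix.add_mulVec, hx, dotProduct_zero]
  exact (hA.dotProduct_mulVec_zero_iff x).1
    ((add_eq_zero_iff_of_nonneg (hA.dotProduct_mulVec_nonneg x)
      (hB.dotProduct_mulVec_nonneg x)).1 hsum).1

theorem Matrix.rank_real_smul {m n : Type*} [Fintype n] {c : ℝ} (hc : c ≠ 0) (A : Matrix m n ℂ) :
    (c • A).rank = A.rank := by
  rw [← Complex.coe_smul]
  exact A.rank_smul_of_mem_nonZeroDivisors (mem_nonZeroDivisors_of_ne_zero (by exact_mod_cast hc))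

section PartialTrace

variable {m n : Type*} [Fintype n]

theorem trB_add (ρ σ : Matrix (m × n) (m × n) ℂ) : trB (ρ + σ) = trB ρ + trB σ := by
  ext i i'
  simp [trB, Finset.sum_add_distrib]

theorem trB_smul {R : Type*} [DistribSMul R ℂ] (c : R) (ρ : Matrix (m × n) (m × n) ℂ) :
    trB (c • ρ) = c • trB ρ := by
  ext i i'
  simp [trB, Finset.smul_sum]

end PartialTrace

namespace IsOrthProjOnto

variable {k : Type*} [Fintype k] {S : Submodule ℂ (k → ℂ)} {P P' : Matrix k k ℂ}

theorem mul_eq_right (hP : IsOrthProjOnto S P) (hP' : IsOrthProjOnto S P') : P * P' = P' :=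
  Matrix.ext_iff_mulVec.2 fun x => by rw [← Matrix.mulVec_mulVec, hP.2.2.2 _ (hP'.2.2.1 x)]

theorem unique (hP : IsOrthProjOnto S P) (hP' : IsOrthProjOnto S P') : P = P' := by
  calc P = (P' * P)ᴴ := by rw [hP'.mul_eq_right hP, hP.1.eq]
    _ = P * P' := by rw [Matrix.conjTranspose_mul, hP.1.eq, hP'.1.eq]
    _ = P' := hP.mul_eq_right hP'

theorem range_mulVecLin (hP : IsOrthProjOnto S P) : LinearMap.range P.mulVecLin = S :=
  le_antisymm (LinearMap.range_le_iff_comap.2 <| eq_top_iff.2 fun x _ => hP.2.2.1 x)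
    fun y hy => ⟨y, hP.2.2.2 y hy⟩

theorem rank_eq (hP : IsOrthProjOnto S P) : P.rank = Module.finrank ℂ S := by
  rw [Matrix.rank, hP.range_mulVecLin]

theorem trace_eq (hP : IsOrthProjOnto S P) : P.trace = Module.finrank ℂ S := by
  have hproj : LinearMap.IsProj S P.mulVecLin := ⟨hP.2.2.1, hP.2.2.2⟩
  classical
  rw [← hproj.trace, ← Matrix.toLin'_apply', Matrix.trace_toLin'_eq]

theorem posSemidef (hP : IsOrthProjOnto S P) : P.PosSemidef := by
  simpa [hP.1.eq, hP.2.1] using Matrix.posSemidef_conjTranspose_mul_self P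

theorem supportedOn (hP : IsOrthProjOnto S P) : SupportedOn S P :=
  ⟨P, hP, by rw [hP.2.1, hP.2.1]⟩

theorem supportedOn_iff (hP : IsOrthProjOnto S P) {T : Matrix k k ℂ} :
    SupportedOn S T ↔ P * T * P = T :=
  ⟨fun ⟨_, hP', hT⟩ => hP.unique hP' ▸ hT, fun hT => ⟨P, hP, hT⟩⟩

theorem isDensity_inv_finrank_smul (hP : IsOrthProjOnto S P) (hS : 0 < Module.finrank ℂ S) :
    IsDensity ((Module.finrank ℂ S : ℝ)⁻¹ • P) := by
  refine ⟨hP.posSemidef.smul (by positivity), ?_⟩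
  rw [Matrix.trace_smul, hP.trace_eq, ← Complex.coe_smul, smul_eq_mul]
  push_cast
  exact inv_mul_cancel₀ (by exact_mod_cast hS.ne')

end IsOrthProjOnto

namespace SupportedOn

variable {k : Type*} [Fintype k] {S : Submodule ℂ (k → ℂ)} {A B : Matrix k k ℂ}

theorem add (hA : SupportedOn S A) (hB : SupportedOn S B) : SupportedOn S (A + B) := by
  obtain ⟨P, hP, hAP⟩ := hA
  rw [hP.supportedOn_iff] at hB ⊢
  rw [Matrix.mul_add, Matrix.add_mul, hAP, hB]

theorem smul {R : Type*} [Monoid R] [DistribMulAction R ℂ] [IsScalarTower R ℂ ℂ]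
    [SMulCommClass R ℂ ℂ] (c : R) (hA : SupportedOn S A) : SupportedOn S (c • A) := by
  obtain ⟨P, hP, hAP⟩ := hA
  exact ⟨P, hP, by rw [Matrix.mul_smul, Matrix.smul_mul, hAP]⟩

theorem rank_le (hA : SupportedOn S A) : A.rank ≤ Module.finrank ℂ S := by
  obtain ⟨P, hP, hAP⟩ := hA
  calc A.rank = (P * (A * P)).rank := by rw [← Matrix.mul_assoc, hAP]
    _ ≤ P.rank := Matrix.rank_mul_le_left _ _
    _ = Module.finrank ℂ S := hP.rank_eq

end SupportedOn

theorem IsDensity.finrank_pos {k : Type*} [Fintype k] {S : Submodule ℂ (k → ℂ)}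
    {ρ : Matrix k k ℂ} (hρ : IsDensity ρ) (hS : SupportedOn S ρ) : 0 < Module.finrank ℂ S := by
  obtain ⟨P, hP, hρP⟩ := hS
  refine Nat.pos_of_ne_zero fun hd => ?_
  have hP0 : P = 0 := Matrix.ext_iff_mulVec.2 fun x => by
    simpa [Submodule.finrank_eq_zero.1 hd] using hP.2.2.1 x
  have h := hρ.2
  rw [← hρP, hP0, Matrix.zero_mul, Matrix.zero_mul, Matrix.trace_zero] at h
  exact zero_ne_one h

theorem convex_setOf_isDensity {k : Type*} [Fintype k] :
    Convex ℝ {ρ : Matrix k k ℂ | IsDensity ρ} := by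
  intro ρ hρ σ hσ a b ha hb hab
  refine ⟨(hρ.1.smul ha).add (hσ.1.smul hb), ?_⟩
  rw [Matrix.trace_add, Matrix.trace_smul, Matrix.trace_smul, hρ.2, hσ.2, ← add_smul, hab,
    one_smul]

theorem interior_point_has_full_rank_preimage_general
    {m n : Type*} [Fintype m] [Fintype n]
    (S : Submodule ℂ (m × n → ℂ))
    (Q : Matrix m m ℂ) (hQ : Q ∈ intrinsicInterior ℝ (DB S)) :
    ∃ ρ : Matrix (m × n) (m × n) ℂ, IsDensity ρ ∧ SupportedOn S ρ ∧
      trB ρ = Q ∧ ρ.rank = Module.finrank ℂ S := by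
  obtain ⟨σ, hσ, hσS, -⟩ := intrinsicInterior_subset hQ
  have hd := hσ.finrank_pos hσS
  obtain ⟨P, hP, -⟩ := hσS
  set d := Module.finrank ℂ S
  set ρ₀ := (d : ℝ)⁻¹ • P
  have hρ₀ : IsDensity ρ₀ := hP.isDensity_inv_finrank_smul hd
  have hρ₀S : SupportedOn S ρ₀ := hP.supportedOn.smul _
  obtain ⟨-, ⟨ρ₁, hρ₁, hρ₁S, rfl⟩, a, b, ha, hb, hab, rfl⟩ :=
    exists_mem_openSegment_of_mem_intrinsicInterior hQ ⟨ρ₀, hρ₀, hρ₀S, rfl⟩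
  have hsupp : SupportedOn S (a • ρ₀ + b • ρ₁) := (hρ₀S.smul a).add (hρ₁S.smul b)
  refine ⟨a • ρ₀ + b • ρ₁, convex_setOf_isDensity hρ₀ hρ₁ ha.le hb.le hab, hsupp,
    by simp only [trB_add, trB_smul], le_antisymm hsupp.rank_le ?_⟩
  calc d = (a • ρ₀).rank := by
        rw [smul_smul, Matrix.rank_real_smul (by positivity), hP.rank_eq]
    _ ≤ (a • ρ₀ + b • ρ₁).rank := (hρ₀.1.smul ha.le).rank_le_rank_add (hρ₁.1.smul hb.le)

theorem interior_point_has_full_rank_preimage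
    {m n : Type*} [Fintype m] [Fintype n] [DecidableEq m] [DecidableEq n]
    (S : Submodule ℂ (m × n → ℂ))
    (Q : Matrix m m ℂ) (hQ : Q ∈ intrinsicInterior ℝ (DB S)) :
    ∃ ρ : Matrix (m × n) (m × n) ℂ, IsDensity ρ ∧ SupportedOn S ρ ∧
      trB ρ = Q ∧ ρ.rank = Module.finrank ℂ S :=
  interior_point_has_full_rank_preimage_general S Q hQ

end
end

section
/- Let ρ : Matrix k k ℂ be positive definite and T : Matrix k k ℂ Hermitian but not positive semidefinite. Then there exists μ > 0 such that ρ + μ • T is positive semidefinite but not positive definite. -/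
/-!
Ordered by `A ≤ B ↔ (B - A).PosSemidef`, `Matrix k k ℂ` is a C*-algebra (with the L² operator
norm) whose strictly positive elements are the positive definite matrices, and the argument works
in any C*-algebra. Let `S = {μ | 0 ≤ ρ + μ • T}`. It is closed and contains `0`; it is bounded
above because for `μ > 0` membership means `0 ≤ μ⁻¹ • ρ + T`, which fails for small `μ⁻¹` since
the positive cone is closed and does not contain `T`. A strictly positive `a` dominates some
`r • 1` with `r > 0`, while `ε • T ≥ -ε‖T‖ • 1`, so `a + ε • T` stays strictly positive for small
`ε > 0`. Applied at `a = ρ` this gives `sSup S > 0`, and applied at `a = ρ + (sSup S) • T` it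
shows that this matrix, which lies in `S`, is not positive definite.
-/

open scoped ComplexOrder

theorem bddAbove_setOf_nonneg_add_smul {A : Type*} [AddCommGroup A] [PartialOrder A]
    [Module ℝ A] [PosSMulMono ℝ A] [TopologicalSpace A] [OrderClosedTopology A]
    [ContinuousSMul ℝ A] [ContinuousAdd A] (a : A) {b : A} (hb : ¬ 0 ≤ b) :
    BddAbove {μ : ℝ | 0 ≤ a + μ • b} := by
  have hclosed : IsClosed {s : ℝ | 0 ≤ s • a + b} := isClosed_le continuous_const (by fun_prop)
  obtain ⟨δ, hδ, hball⟩ := Metric.isOpen_iff.mp hclosed.isOpen_compl 0 (by simpa using hb)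
  refine ⟨δ⁻¹, fun μ hμ => le_of_not_gt fun hlt => ?_⟩
  have hμ0 : 0 < μ := (inv_pos.mpr hδ).trans hlt
  have hsmall : μ⁻¹ ∈ Metric.ball (0 : ℝ) δ := by
    rw [Metric.mem_ball, dist_zero_right, Real.norm_eq_abs, abs_of_pos (inv_pos.mpr hμ0)]
    exact inv_lt_of_inv_lt₀ hδ hlt
  refine hball hsmall ?_
  simpa [smul_add, smul_smul, hμ0.ne'] using smul_nonneg (inv_pos.mpr hμ0).le hμ

section CStarAlgebra

variable {A : Type*} [CStarAlgebra A] [PartialOrder A] [StarOrderedRing A]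

theorem IsStrictlyPositive.exists_pos_isStrictlyPositive_add_smul [Nontrivial A] {a b : A}
    (ha : IsStrictlyPositive a) (hb : IsSelfAdjoint b) :
    ∃ ε : ℝ, 0 < ε ∧ IsStrictlyPositive (a + ε • b) := by
  obtain ⟨r, hr, hra⟩ := (CFC.exists_pos_algebraMap_le_iff ha.isSelfAdjoint).mpr
    fun x hx => ha.spectrum_pos hx
  set ε := r / (‖b‖ + 1)
  have hε : 0 < ε := by positivity
  have hεr : r - ε * ‖b‖ = ε := by simp only [ε]; field_simp; ring
  refine ⟨ε, hε, (isStrictlyPositive_algebraMap (A := A) hε).of_le ?_⟩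
  calc algebraMap ℝ A ε = algebraMap ℝ A r + ε • -algebraMap ℝ A ‖b‖ := by
        conv_lhs => rw [← hεr]
        rw [map_sub, map_mul, Algebra.smul_def, mul_neg, sub_eq_add_neg]
    _ ≤ a + ε • b :=
        add_le_add hra (smul_le_smul_of_nonneg_left hb.neg_algebraMap_norm_le_self hε.le)

theorem IsStrictlyPositive.exists_pos_nonneg_add_smul_not_isStrictlyPositive {a b : A}
    (ha : IsStrictlyPositive a) (hb : IsSelfAdjoint b) (hb' : ¬ 0 ≤ b) :
    ∃ μ : ℝ, 0 < μ ∧ 0 ≤ a + μ • b ∧ ¬ IsStrictlyPositive (a + μ • b) := by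
  have : Nontrivial A := ⟨0, b, fun h => hb' (h ▸ le_rfl)⟩
  set S := {μ : ℝ | 0 ≤ a + μ • b}
  have hS : IsClosed S := isClosed_le continuous_const (by fun_prop)
  have hS_bdd : BddAbove S := bddAbove_setOf_nonneg_add_smul a hb'
  have hS_ne : S.Nonempty := ⟨0, by simpa [S] using ha.nonneg⟩
  obtain ⟨ε, hε, hε_pos⟩ := ha.exists_pos_isStrictlyPositive_add_smul hb
  refine ⟨sSup S, hε.trans_le (le_csSup hS_bdd hε_pos.nonneg), hS.csSup_mem hS_ne hS_bdd,
    fun hsup => ?_⟩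
  obtain ⟨ε', hε', hε'_pos⟩ := hsup.exists_pos_isStrictlyPositive_add_smul hb
  have : sSup S + ε' ∈ S := by
    rw [Set.mem_ofPred_eq, add_smul, ← add_assoc]
    exact hε'_pos.nonneg
  linarith [le_csSup hS_bdd this]

end CStarAlgebra

open scoped Matrix.Norms.L2Operator MatrixOrder in
theorem exists_mu_psd_not_pd_general
    {k : Type*} [Fintype k] [DecidableEq k]
    (ρ T : Matrix k k ℂ) (hρ : ρ.PosDef) (hT : T.IsHermitian)
    (hT' : ¬ T.PosSemidef) :
    ∃ μ : ℝ, 0 < μ ∧ (ρ + μ • T).PosSemidef ∧ ¬ (ρ + μ • T).PosDef := by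
  obtain ⟨μ, hμ, hnonneg, hnot⟩ :=
    hρ.isStrictlyPositive.exists_pos_nonneg_add_smul_not_isStrictlyPositive hT.isSelfAdjoint
      fun h => hT' (Matrix.nonneg_iff_posSemidef.mp h)
  exact ⟨μ, hμ, Matrix.nonneg_iff_posSemidef.mp hnonneg, fun h => hnot h.isStrictlyPositive⟩

theorem exists_mu_psd_not_pd
    {k : Type*} [Fintype k] [DecidableEq k] [Nonempty k]
    (ρ T : Matrix k k ℂ) (hρ : ρ.PosDef) (hT : T.IsHermitian)
    (hT' : ¬ T.PosSemidef) :
    ∃ μ : ℝ, 0 < μ ∧ (ρ + μ • T).PosSemidef ∧ ¬ (ρ + μ • T).PosDef :=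
  exists_mu_psd_not_pd_general ρ T hρ hT hT'
end

section
/- Consider Hermitian matrices on the index type (α ⊕ β) ⊕ γ written in 3×3 block form. Let V be the block matrix whose only nonzero block is the (3,3) block X, with X : Matrix γ γ ℂ positive definite, and let W be a Hermitian block matrix whose (1,1), (1,2) and (2,1) blocks are zero, whose (2,2) block Y22 is positive definite, and whose (1,3) block is Y13 (with (3,1) block Y13ᴴ) and remaining blocks Y23, Y32 = Y23ᴴ, Y33 arbitrary (Y33 Hermitian). Then there exists t > 0 such that t • V + W is positive semidefinite if and only if Y13 = 0. -/
/-!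
If `t • V + W` is positive semidefinite, its diagonal entries indexed by `α` vanish, and a
positive semidefinite matrix with a zero diagonal entry has the whole corresponding row zero;
that row contains `Y13`.

Conversely, when `Y13 = 0` the `α` rows and columns vanish, and what is left is
`fromBlocks Y22 Y23 Y23ᴴ (t • X + Y33)`. Since `Y22` is positive definite, this is positive
semidefinite iff its Schur complement `t • X + (Y33 - Y23ᴴ * Y22⁻¹ * Y23)` is, and a large
multiple of the strictly positive `X` dominates any self-adjoint perturbation.
-/

open Matrix
open scoped ComplexOrder

theorem IsStrictlyPositive.exists_pos_smul_add_nonneg {A : Type*} [CStarAlgebra A]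
    [PartialOrder A] [StarOrderedRing A] {a b : A} (ha : IsStrictlyPositive a)
    (hb : IsSelfAdjoint b) : ∃ t > (0 : ℝ), 0 ≤ t • a + b := by
  cases subsingleton_or_nontrivial A
  · exact ⟨1, one_pos, (Subsingleton.elim _ _).le⟩
  obtain ⟨r, hr, hra⟩ : ∃ r > 0, algebraMap ℝ A r ≤ a :=
    (CFC.exists_pos_algebraMap_le_iff ha.isSelfAdjoint).2 fun x hx ↦ ha.spectrum_pos hx
  set t := ‖b‖ / r + 1
  have ht : 0 < t := by positivity
  refine ⟨t, ht, ?_⟩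
  calc (0 : A) ≤ algebraMap ℝ A r := algebraMap_nonneg A hr.le
    _ = t • algebraMap ℝ A r - algebraMap ℝ A ‖b‖ := by
        rw [Algebra.smul_def, ← map_mul, ← map_sub]
        congr 1
        simp only [t]
        field_simp
        ring
    _ ≤ t • a + b := by
        rw [sub_eq_add_neg]
        exact add_le_add (smul_le_smul_of_nonneg_left hra ht.le) hb.neg_algebraMap_norm_le_self

namespace Matrix

variable {m n : Type*} [Fintype m] [Fintype n]

open scoped Matrix.Norms.L2Operator MatrixOrder in
theorem PosDef.exists_pos_smul_add_posSemidef {X K : Matrix n n ℂ} (hX : X.PosDef)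
    (hK : K.IsHermitian) : ∃ t > (0 : ℝ), (t • X + K).PosSemidef := by
  classical
  obtain ⟨t, ht, h⟩ := hX.isStrictlyPositive.exists_pos_smul_add_nonneg hK
  exact ⟨t, ht, nonneg_iff_posSemidef.1 h⟩

theorem PosDef.exists_pos_fromBlocks_smul_add_posSemidef {A : Matrix m m ℂ} (hA : A.PosDef)
    (B : Matrix m n ℂ) {X D : Matrix n n ℂ} (hX : X.PosDef) (hD : D.IsHermitian) :
    ∃ t > (0 : ℝ), (fromBlocks A B Bᴴ (t • X + D)).PosSemidef := by
  classical
  have : Invertible A := hA.isUnit.invertible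
  obtain ⟨t, ht, h⟩ :=
    hX.exists_pos_smul_add_posSemidef (hD.sub (isHermitian_conjTranspose_mul_mul B hA.1.inv))
  refine ⟨t, ht, ?_⟩
  rwa [hA.fromBlocks₁₁, add_sub_assoc]

theorem PosSemidef.apply_eq_zero_of_diag_eq_zero {𝕜 : Type*} [RCLike 𝕜] {A : Matrix n n 𝕜}
    (hA : A.PosSemidef) {i : n} (hi : A i i = 0) (j : n) : A i j = 0 := by
  classical
  have hcol : A *ᵥ Pi.single i 1 = 0 :=
    (hA.dotProduct_mulVec_zero_iff _).1 (by simpa [mulVec_single] using hi)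
  rw [← hA.1.apply, show A j i = 0 by simpa [mulVec_single] using congrFun hcol j, star_zero]

theorem PosSemidef.fromBlocks_zero_zero_zero {R : Type*} [Ring R] [PartialOrder R] [StarRing R]
    {D : Matrix n n R} (hD : D.PosSemidef) : (fromBlocks (0 : Matrix m m R) 0 0 D).PosSemidef := by
  refine .of_dotProduct_mulVec_nonneg ?_ fun x => ?_
  · simp [IsHermitian, fromBlocks_conjTranspose, hD.1.eq]
  · obtain ⟨u, v, rfl⟩ : ∃ u v, x = Sum.elim u v := ⟨_, _, (Sum.elim_comp_inl_inr x).symm⟩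
    simpa [fromBlocks_mulVec, Function.star_sumElim] using hD.dotProduct_mulVec_nonneg v

end Matrix

theorem erdahl_lemma_fix_general
    {α β γ : Type*} [Fintype α] [Fintype β] [Fintype γ]
    (X : Matrix γ γ ℂ) (hX : X.PosDef)
    (Y22 : Matrix β β ℂ) (hY22 : Y22.PosDef)
    (Y13 : Matrix α γ ℂ) (Y23 : Matrix β γ ℂ)
    (Y33 : Matrix γ γ ℂ) (hY33 : Y33.IsHermitian)
    (V W : Matrix ((α ⊕ β) ⊕ γ) ((α ⊕ β) ⊕ γ) ℂ)
    (hV : V = Matrix.fromBlocks (0 : Matrix (α ⊕ β) (α ⊕ β) ℂ) 0 0 X)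
    (hW : W = Matrix.fromBlocks
      (Matrix.fromBlocks (0 : Matrix α α ℂ) 0 0 Y22)
      (Matrix.fromRows Y13 Y23)
      (Matrix.fromCols Y13ᴴ Y23ᴴ) Y33) :
    (∃ t : ℝ, 0 < t ∧ (t • V + W).PosSemidef) ↔ Y13 = 0 := by
  subst hV hW
  constructor
  · rintro ⟨t, -, h⟩
    ext a c
    simpa using h.apply_eq_zero_of_diag_eq_zero (i := .inl (.inl a)) (by simp) (.inr c)
  · rintro rfl
    obtain ⟨t, ht, h⟩ := hY22.exists_pos_fromBlocks_smul_add_posSemidef Y23 hX hY33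
    refine ⟨t, ht, ?_⟩
    convert (h.fromBlocks_zero_zero_zero (m := α)).submatrix (Equiv.sumAssoc α β γ) using 1
    ext ((a | b) | c) ((a | b) | c) <;> simp

theorem erdahl_lemma_fix
    {α β γ : Type*} [Fintype α] [Fintype β] [Fintype γ]
    [DecidableEq α] [DecidableEq β] [DecidableEq γ]
    (X : Matrix γ γ ℂ) (hX : X.PosDef)
    (Y22 : Matrix β β ℂ) (hY22 : Y22.PosDef)
    (Y13 : Matrix α γ ℂ) (Y23 : Matrix β γ ℂ)
    (Y33 : Matrix γ γ ℂ) (hY33 : Y33.IsHermitian)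
    (V W : Matrix ((α ⊕ β) ⊕ γ) ((α ⊕ β) ⊕ γ) ℂ)
    (hV : V = Matrix.fromBlocks (0 : Matrix (α ⊕ β) (α ⊕ β) ℂ) 0 0 X)
    (hW : W = Matrix.fromBlocks
      (Matrix.fromBlocks (0 : Matrix α α ℂ) 0 0 Y22)
      (Matrix.fromRows Y13 Y23)
      (Matrix.fromCols Y13ᴴ Y23ᴴ) Y33) :
    (∃ t : ℝ, 0 < t ∧ (t • V + W).PosSemidef) ↔ Y13 = 0 :=
  erdahl_lemma_fix_general X hX Y22 hY22 Y13 Y23 Y33 hY33 V W hV hW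
end

section
/- Let H : Matrix k k ℂ be Hermitian and suppose there exist vectors x and y with re(star x ⬝ᵥ H.mulVec x) > 0 and re(star y ⬝ᵥ H.mulVec y) < 0 (H has both positive and negative eigenvalues). Then there exists a vector ψ with star ψ ⬝ᵥ H.mulVec ψ = 0 and H.mulVec ψ ≠ 0, i.e., the quadratic form of H vanishes at ψ although ψ is not in the kernel of H. -/
/-!
Along the real line `t ↦ x + t • y` the quadratic form of `H` is a real quadratic polynomial in `t`
whose leading coefficient `⟪y, H y⟫ < 0` and constant term `⟪x, H x⟫ > 0` have opposite signs, so it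
has a real root `t`. The vector `ψ = x + t • y` is not in the kernel of `H`: adding a kernel vector
does not change the form of a Hermitian matrix, so otherwise `⟪x, H x⟫ = ⟪-t y, H (-t y)⟫ = t² ⟪y, H y⟫ ≤ 0`.
-/

open Matrix

lemma exists_quadratic_eq_zero_of_mul_neg {a b c : ℝ} (h : a * c < 0) :
    ∃ t, a * (t * t) + b * t + c = 0 := by
  have hdiscrim : 0 ≤ discrim a b c := by rw [discrim]; nlinarith [sq_nonneg b]
  exact exists_quadratic_eq_zero (by rintro rfl; simp at h)
    ⟨√(discrim a b c), (Real.mul_self_sqrt hdiscrim).symm⟩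

namespace Matrix

variable {n 𝕜 : Type*} [Fintype n] [RCLike 𝕜] {H : Matrix n n 𝕜}

lemma re_star_add_smul_dotProduct_mulVec_add_smul (H : Matrix n n 𝕜) (x y : n → 𝕜) (t : ℝ) :
    RCLike.re (star (x + (t : 𝕜) • y) ⬝ᵥ H *ᵥ (x + (t : 𝕜) • y)) =
      RCLike.re (star y ⬝ᵥ H *ᵥ y) * (t * t) +
        RCLike.re (star x ⬝ᵥ H *ᵥ y + star y ⬝ᵥ H *ᵥ x) * t + RCLike.re (star x ⬝ᵥ H *ᵥ x) := by
  simp only [star_add, star_smul, mulVec_add, mulVec_smul, dotProduct_add, add_dotProduct,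
    dotProduct_smul, smul_dotProduct, smul_eq_mul, RCLike.star_def, RCLike.conj_ofReal, map_add,
    RCLike.re_ofReal_mul]
  ring

lemma IsHermitian.star_dotProduct_mulVec_eq_zero {v : n → 𝕜} (hH : H.IsHermitian)
    (hv : H *ᵥ v = 0) (w : n → 𝕜) : star v ⬝ᵥ H *ᵥ w = 0 := by
  rw [dotProduct_mulVec, ← hH.eq, ← star_mulVec, hv, star_zero, zero_dotProduct]

lemma IsHermitian.star_add_dotProduct_mulVec_add {v : n → 𝕜} (hH : H.IsHermitian)
    (hv : H *ᵥ v = 0) (w : n → 𝕜) :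
    star (v + w) ⬝ᵥ H *ᵥ (v + w) = star w ⬝ᵥ H *ᵥ w := by
  rw [mulVec_add, hv, zero_add, star_add, add_dotProduct,
    hH.star_dotProduct_mulVec_eq_zero hv, zero_add]

lemma IsHermitian.mulVec_add_smul_ne_zero {x y : n → 𝕜} (hH : H.IsHermitian)
    (hx : 0 < RCLike.re (star x ⬝ᵥ H *ᵥ x)) (hy : RCLike.re (star y ⬝ᵥ H *ᵥ y) ≤ 0) (t : ℝ) :
    H *ᵥ (x + (t : 𝕜) • y) ≠ 0 := by
  intro hker
  have hx_eq : x = (x + (t : 𝕜) • y) + ((-t : ℝ) : 𝕜) • y := by simp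
  have hform : RCLike.re (star x ⬝ᵥ H *ᵥ x) = RCLike.re (star y ⬝ᵥ H *ᵥ y) * (t * t) := by
    rw [hx_eq, hH.star_add_dotProduct_mulVec_add hker, ← zero_add (((-t : ℝ) : 𝕜) • y),
      re_star_add_smul_dotProduct_mulVec_add_smul]
    simp
  nlinarith [mul_self_nonneg t]

end Matrix

theorem indefinite_has_null_vector_outside_kernel_general
    {k : Type*} [Fintype k]
    (H : Matrix k k ℂ) (hH : H.IsHermitian)
    (x y : k → ℂ)
    (hx : 0 < (star x ⬝ᵥ H.mulVec x).re)
    (hy : (star y ⬝ᵥ H.mulVec y).re < 0) :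
    ∃ ψ : k → ℂ, star ψ ⬝ᵥ H.mulVec ψ = 0 ∧ H.mulVec ψ ≠ 0 := by
  obtain ⟨t, ht⟩ := exists_quadratic_eq_zero_of_mul_neg (b := RCLike.re
    (star x ⬝ᵥ H *ᵥ y + star y ⬝ᵥ H *ᵥ x)) (mul_neg_of_neg_of_pos hy hx)
  refine ⟨x + (t : ℂ) • y, ?_, hH.mulVec_add_smul_ne_zero hx hy.le t⟩
  refine RCLike.ext ?_ (hH.im_star_dotProduct_mulVec_self _)
  exact (re_star_add_smul_dotProduct_mulVec_add_smul H x y t).trans (by simpa using ht)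

theorem indefinite_has_null_vector_outside_kernel
    {k : Type*} [Fintype k] [DecidableEq k]
    (H : Matrix k k ℂ) (hH : H.IsHermitian)
    (x y : k → ℂ)
    (hx : 0 < (star x ⬝ᵥ H.mulVec x).re)
    (hy : (star y ⬝ᵥ H.mulVec y).re < 0) :
    ∃ ψ : k → ℂ, star ψ ⬝ᵥ H.mulVec ψ = 0 ∧ H.mulVec ψ ≠ 0 :=
  indefinite_has_null_vector_outside_kernel_general H hH x y hx hy
end

section
/- Let R be a ℂ-submodule of (k → ℂ). Then the set of density matrices ρ : Matrix k k ℂ whose range is contained in R (i.e., ρ.mulVec x ∈ R for all x) is a face of the set of all k × k density matrices: IsExtreme ℝ {ρ | ρ is a density matrix} {ρ | ρ is a density matrix and ρ.mulVec x ∈ R for all x}. -/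
/-!
If `ρ = a ρ₁ + b ρ₂` with `a, b > 0` and `ρ₁, ρ₂ ⪰ 0`, then `x⋆ ρ x = 0` forces `x⋆ ρ₁ x = 0`,
so `ker ρ ⊆ ker ρ₁`. For Hermitian matrices the range is the orthogonal complement of the kernel,
hence `range ρ₁ ⊆ range ρ ⊆ R`.
-/

open scoped ComplexOrder

theorem LinearMap.IsSymmetric.range_le_range_of_ker_le {𝕜 E : Type*} [RCLike 𝕜]
    [NormedAddCommGroup E] [InnerProductSpace 𝕜 E] [FiniteDimensional 𝕜 E]
    {S T : E →ₗ[𝕜] E} (hS : S.IsSymmetric) (hT : T.IsSymmetric) (h : ker T ≤ ker S) :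
    range S ≤ range T := by
  rwa [← hS.orthogonal_range, ← hT.orthogonal_range, Submodule.orthogonal_le_orthogonal_iff] at h

namespace Matrix

open LinearMap (ker range)

variable {𝕜 n : Type*} [RCLike 𝕜] [Fintype n]

theorem PosSemidef.mulVec_eq_zero_of_add_mulVec_eq_zero {A B : Matrix n n 𝕜}
    (hA : A.PosSemidef) (hB : B.PosSemidef) {x : n → 𝕜} (h : (A + B) *ᵥ x = 0) :
    A *ᵥ x = 0 := by
  have hsum : star x ⬝ᵥ A *ᵥ x + star x ⬝ᵥ B *ᵥ x = 0 := by
    rw [← dotProduct_add, ← add_mulVec, h, dotProduct_zero]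
  rw [← hA.dotProduct_mulVec_zero_iff]
  exact ((add_eq_zero_iff_of_nonneg (hA.dotProduct_mulVec_nonneg x)
    (hB.dotProduct_mulVec_nonneg x)).mp hsum).1

theorem PosSemidef.ker_mulVecLin_le_of_mem_openSegment {A B C : Matrix n n 𝕜}
    (hA : A.PosSemidef) (hB : B.PosSemidef) (hC : C ∈ openSegment ℝ A B) :
    ker C.mulVecLin ≤ ker A.mulVecLin := by
  obtain ⟨a, b, ha, hb, -, rfl⟩ := hC
  intro x hx
  have hax : (a • A) *ᵥ x = 0 :=
    (hA.smul ha.le).mulVec_eq_zero_of_add_mulVec_eq_zero (hB.smul hb.le) hx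
  rw [smul_mulVec, smul_eq_zero] at hax
  exact hax.resolve_left ha.ne'

theorem IsHermitian.range_mulVecLin_le_of_ker_le {A B : Matrix n n 𝕜}
    (hA : A.IsHermitian) (hB : B.IsHermitian) (h : ker B.mulVecLin ≤ ker A.mulVecLin) :
    range A.mulVecLin ≤ range B.mulVecLin := by
  classical
  have hE : ker B.toEuclideanLin ≤ ker A.toEuclideanLin := fun v hv => by
    simpa [toLpLin_apply] using h (by simpa [toLpLin_apply] using hv)
  rintro _ ⟨x, rfl⟩
  obtain ⟨y, hy⟩ := (isSymmetric_toEuclideanLin_iff.mpr hA).range_le_range_of_ker_le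
    (isSymmetric_toEuclideanLin_iff.mpr hB) hE ⟨WithLp.toLp 2 x, rfl⟩
  exact ⟨y.ofLp, by simpa [toLpLin_apply] using congrArg WithLp.ofLp hy⟩

end Matrix

theorem densities_with_range_in_subspace_form_face_general
    {k : Type*} [Fintype k] (R : Submodule ℂ (k → ℂ)) :
    IsExtreme ℝ
      {ρ : Matrix k k ℂ | ρ.PosSemidef ∧ ρ.trace = 1}
      {ρ : Matrix k k ℂ | (ρ.PosSemidef ∧ ρ.trace = 1) ∧ ∀ x, ρ.mulVec x ∈ R} := by
  refine ⟨fun ρ hρ => hρ.1, ?_⟩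
  rintro ρ₁ hρ₁ ρ₂ hρ₂ ρ ⟨⟨hρ, -⟩, hρR⟩ hseg
  refine ⟨hρ₁, fun x => ?_⟩
  obtain ⟨y, hy⟩ := hρ₁.1.isHermitian.range_mulVecLin_le_of_ker_le hρ.isHermitian
    (hρ₁.1.ker_mulVecLin_le_of_mem_openSegment hρ₂.1 hseg) ⟨x, rfl⟩
  rw [← Matrix.mulVecLin_apply, ← hy]
  exact hρR y

theorem densities_with_range_in_subspace_form_face
    {k : Type*} [Fintype k] [DecidableEq k] (R : Submodule ℂ (k → ℂ)) :
    IsExtreme ℝ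
      {ρ : Matrix k k ℂ | ρ.PosSemidef ∧ ρ.trace = 1}
      {ρ : Matrix k k ℂ | (ρ.PosSemidef ∧ ρ.trace = 1) ∧ ∀ x, ρ.mulVec x ∈ R} :=
  densities_with_range_in_subspace_form_face_general R
end
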